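/- arXiv:2001.00427 — 13 statements merged into one kernel-verified Lean document; each statement's English description precedes it below -/
import Mathlib

section
/- Let R be a ring, φ : R → R a multiplicative Lie derivation, and e ∈ R an idempotent. Define d(x) = [φ(1-e), x] (an inner derivation, where 1-e is replaced by any fixed element q) and φ₁ = φ - d where d(x) = [φ(q), x] for a fixed idempotent q = 1 - e. Then φ₁ is again a multiplicative Lie derivation and e·φ₁(q)·q = 0. -/
/-- `φ₁ = φ - d` where `d(x) = [φ(q), x]` with `q = 1 - e`. -/
def phiOne {R : Type*} [Ring R] (φ : R → R) (e : R) : R → R :=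
  fun x => φ x - (φ (1 - e) * x - x * φ (1 - e))

theorem mult_lie_derivation_adjust (R : Type*) [Ring R] (e : R) (he : e * e = e)
    (φ : R → R)
    (hφ : ∀ x y : R, φ (x * y - y * x) = φ x * y - y * φ x + (x * φ y - φ y * x)) :
    (∀ x y : R, phiOne φ e (x * y - y * x) =
        phiOne φ e x * y - y * phiOne φ e x + (x * phiOne φ e y - phiOne φ e y * x)) ∧
    e * phiOne φ e (1 - e) * (1 - e) = 0 := by
  constructor
  · intro x y
    simp only [phiOne, hφ]
    noncomm_ring
  · have hq : e * (1 - e) = 0 := by rw [mul_sub, mul_one, he, sub_self]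
    have hqq : (1 - e) * (1 - e) = 1 - e := by noncomm_ring [he]
    simp only [phiOne]
    calc e * (φ (1 - e) - (φ (1 - e) * (1 - e) - (1 - e) * φ (1 - e))) * (1 - e)
        = e * φ (1 - e) * (1 - e) - e * φ (1 - e) * ((1 - e) * (1 - e))
          + (e * (1 - e)) * (φ (1 - e) * (1 - e)) := by noncomm_ring
      _ = 0 := by rw [hq, hqq]; noncomm_ring
end

section
/- Let R be a unital ring with idempotent e, q = 1 - e, and suppose qxe = 0 for all x ∈ R (i.e., R is 'triangular' with respect to e). If φ₁ : R → R is a multiplicative Lie derivation with eφ₁(q)q = 0, then for every a ∈ eRe and every b ∈ qRq one has eφ₁(a)q = 0 and eφ₁(b)q = 0. -/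
theorem corner_images_vanish (R : Type*) [Ring R] (e : R) (he : e * e = e)
    (htri : ∀ x : R, (1 - e) * x * e = 0) (φ₁ : R → R)
    (hφ : ∀ x y : R, φ₁ (x * y - y * x) = φ₁ x * y - y * φ₁ x + (x * φ₁ y - φ₁ y * x))
    (h0 : e * φ₁ (1 - e) * (1 - e) = 0) :
    (∀ a : R, a = e * a * e → e * φ₁ a * (1 - e) = 0) ∧
    (∀ b : R, b = (1 - e) * b * (1 - e) → e * φ₁ b * (1 - e) = 0) := by
  have hq0 : φ₁ 0 = 0 := by
    have := hφ 0 0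
    simpa using this
  set q := 1 - e with hqdef
  have heq : e * q = 0 := by rw [hqdef, mul_sub, mul_one, he, sub_self]
  have hqe : q * e = 0 := by rw [hqdef, sub_mul, one_mul, he, sub_self]
  have hqq : q * q = q := by rw [hqdef, mul_sub, mul_one, ← hqdef, hqe, sub_zero]
  constructor
  · intro a ha
    have hae : a * e = a := by rw [ha, mul_assoc (e*a) e e, he]
    have hea : e * a = a := by
      rw [ha, ← mul_assoc e (e*a) e, ← mul_assoc e e a, he]
    have haq : a * q = 0 := by rw [hqdef, mul_sub, mul_one, hae, sub_self]
    have hqa : q * a = 0 := by rw [hqdef, sub_mul, one_mul, hea, sub_self]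
    have key : φ₁ a * q - q * φ₁ a + (a * φ₁ q - φ₁ q * a) = 0 := by
      rw [← hφ, haq, hqa, sub_self, hq0]
    have H : e * (φ₁ a * q - q * φ₁ a + (a * φ₁ q - φ₁ q * a)) * q = 0 := by
      rw [key, mul_zero, zero_mul]
    simp only [mul_sub, sub_mul, mul_add, add_mul] at H
    have t1 : e * (φ₁ a * q) * q = e * φ₁ a * q := by
      rw [mul_assoc e (φ₁ a) q, ← mul_assoc, mul_assoc (e * φ₁ a) q q, hqq]
    have t2 : e * (q * φ₁ a) * q = 0 := by
      rw [← mul_assoc, heq, zero_mul, zero_mul]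
    have t3 : e * (a * φ₁ q) * q = 0 := by
      conv_lhs => rw [← hae]
      rw [← mul_assoc e (a*e) (φ₁ q), ← mul_assoc e a e, mul_assoc (e*a) e (φ₁ q),
        mul_assoc (e*a) (e * φ₁ q) q, h0, mul_zero]
    have t4 : e * (φ₁ q * a) * q = 0 := by
      rw [← mul_assoc, mul_assoc (e * φ₁ q) a q, haq, mul_zero]
    rw [t1, t2, t3, t4] at H
    simpa using H
  · intro b hb
    have hbq : b * q = b := by rw [hb, mul_assoc (q*b) q q, hqq]
    have hqb : q * b = b := by rw [hb, ← mul_assoc q (q*b) q, ← mul_assoc q q b, hqq]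
    have heb : e * b = 0 := by rw [← hqb, ← mul_assoc, heq, zero_mul]
    have key : φ₁ b * q - q * φ₁ b + (b * φ₁ q - φ₁ q * b) = 0 := by
      rw [← hφ, hbq, hqb, sub_self, hq0]
    have H : e * (φ₁ b * q - q * φ₁ b + (b * φ₁ q - φ₁ q * b)) * q = 0 := by
      rw [key, mul_zero, zero_mul]
    simp only [mul_sub, sub_mul, mul_add, add_mul] at H
    have t1 : e * (φ₁ b * q) * q = e * φ₁ b * q := by
      rw [mul_assoc e (φ₁ b) q, ← mul_assoc, mul_assoc (e * φ₁ b) q q, hqq]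
    have t2 : e * (q * φ₁ b) * q = 0 := by
      rw [← mul_assoc, heq, zero_mul, zero_mul]
    have t3 : e * (b * φ₁ q) * q = 0 := by
      rw [← mul_assoc, heb, zero_mul, zero_mul]
    have t4 : e * (φ₁ q * b) * q = 0 := by
      conv_lhs => rw [← hqb]
      rw [← mul_assoc (φ₁ q) q b, ← mul_assoc e (φ₁ q * q) b, ← mul_assoc e (φ₁ q) q,
        h0, zero_mul, zero_mul]
    rw [t1, t2, t3, t4] at H
    simpa using H
end

section
/- Let R be a unital ring, e an idempotent with qxe = 0 for all x ∈ R where q = 1 - e, and φ₁ a multiplicative Lie derivation with eφ₁(q)q = 0. Then for every m ∈ eRq one has φ₁(m) = eφ₁(m)q; that is, φ₁ maps the corner eRq into itself. -/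
theorem offdiag_corner_preserved (R : Type*) [Ring R] (e : R) (he : e * e = e)
    (htri : ∀ x : R, (1 - e) * x * e = 0) (φ₁ : R → R)
    (hφ : ∀ x y : R, φ₁ (x * y - y * x) = φ₁ x * y - y * φ₁ x + (x * φ₁ y - φ₁ y * x))
    (h0 : e * φ₁ (1 - e) * (1 - e) = 0) :
    ∀ m : R, m = e * m * (1 - e) → φ₁ m = e * φ₁ m * (1 - e) := by
  intro m hm
  have hqe : (1 - e) * e = 0 := by rw [sub_mul, one_mul, he, sub_self]
  have hqq : (1 - e) * (1 - e) = 1 - e := by rw [mul_sub, mul_one, hqe, sub_zero]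
  have hme : m * e = 0 := by
    rw [hm, mul_assoc (e * m), hqe, mul_zero]
  have hqm : (1 - e) * m = 0 := by
    rw [hm, ← mul_assoc, ← mul_assoc, hqe, zero_mul, zero_mul]
  have hem : e * m = m := by
    nth_rewrite 2 [hm]
    rw [hm, ← mul_assoc, ← mul_assoc, he, mul_assoc (e * m), hqq]
  have hmxe : ∀ x : R, m * (x * e) = 0 := by
    intro x
    rw [hm, mul_assoc (e * m), ← mul_assoc (1 - e), htri, mul_zero]
  have hcomm : e * m - m * e = m := by rw [hem, hme, sub_zero]
  have hD : φ₁ m = φ₁ e * m - m * φ₁ e + (e * φ₁ m - φ₁ m * e) := by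
    nth_rewrite 1 [← hcomm]
    exact hφ e m
  set E := φ₁ e with hE
  set D := φ₁ m with hDdef
  -- q D e = 0
  have hqDe : (1 - e) * D * e = 0 := htri D
  -- e D e = 0
  have heDe : e * D * e = 0 := by
    have h1 : e * D * e = e * (E * m - m * E + (e * D - D * e)) * e := by
      rw [← hD]
    have h2 : e * (E * m - m * E + (e * D - D * e)) * e
        = e * (E * (m * e)) - e * (m * (E * e)) + (e * e * (D * e) - e * (D * (e * e))) := by
      noncomm_ring
    rw [h1, h2, hme, mul_zero, mul_zero, hmxe, mul_zero, he]
    noncomm_ring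
  -- q D q = 0
  have hqDq : (1 - e) * D * (1 - e) = 0 := by
    have h1 : (1 - e) * D * (1 - e)
        = (1 - e) * (E * m - m * E + (e * D - D * e)) * (1 - e) := by rw [← hD]
    have h2 : (1 - e) * (E * m - m * E + (e * D - D * e)) * (1 - e)
        = (1 - e) * E * m * (1 - e) - (1 - e) * m * (E * (1 - e))
          + ((1 - e) * e * (D * (1 - e)) - (1 - e) * D * e * (1 - e)) := by
      noncomm_ring
    have h3 : (1 - e) * E * m = 0 := by
      have ha : (1 - e) * E * (e * m * (1 - e)) = ((1 - e) * E * e) * (m * (1 - e)) := by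
        noncomm_ring
      rw [hm, ha, htri, zero_mul]
    rw [h1, h2, h3, zero_mul, hqm, zero_mul, hqe, zero_mul, hqDe, zero_mul]
    noncomm_ring
  -- conclude: D = (e + q) D (e + q)
  calc D = e * D * e + e * D * (1 - e) + ((1 - e) * D * e + (1 - e) * D * (1 - e)) := by
        noncomm_ring
    _ = e * D * (1 - e) := by rw [heDe, hqDe, hqDq]; noncomm_ring
end

section
/- Let R be a unital ring, e an idempotent with qxe = 0 for all x ∈ R, q = 1 - e, and φ₁ a multiplicative Lie derivation with eφ₁(q)q = 0. Then eφ₁(b)e commutes with every element of eRe for all b ∈ qRq, and qφ₁(a)q commutes with every element of qRq for all a ∈ eRe. -/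
lemma corner_comm_aux {R : Type*} [Ring R] (e q : R) (hee : e * e = e)
    (hqe : q * e = 0) (heq : e * q = 0) (φ₁ : R → R)
    (hφ : ∀ x y : R, φ₁ (x * y - y * x) = φ₁ x * y - y * φ₁ x + (x * φ₁ y - φ₁ y * x)) :
    ∀ b : R, b = q * b * q → ∀ a' : R, a' = e * a' * e →
      a' * (e * φ₁ b * e) = (e * φ₁ b * e) * a' := by
  intro b hb a' ha'
  have h0 : φ₁ (0 : R) = 0 := by have := hφ 0 0; simpa using this
  have hbe : b * e = 0 := by rw [hb, mul_assoc, hqe, mul_zero]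
  have heb : e * b = 0 := by rw [hb, ← mul_assoc, ← mul_assoc, heq, zero_mul, zero_mul]
  have hae : a' * e = a' := by rw [ha', mul_assoc, hee]
  have hea : e * a' = a' := by rw [ha', ← mul_assoc, ← mul_assoc, hee]
  have hab : a' * b = 0 := by rw [ha', mul_assoc, heb, mul_zero]
  have hba : b * a' = 0 := by rw [ha', ← mul_assoc, ← mul_assoc, hbe, zero_mul, zero_mul]
  have key := hφ a' b
  rw [hab, hba, sub_zero, h0] at key
  have key2 := congrArg (fun x => e * x * e) key.symm
  have H1 : ∀ x : R, b * (e * x) = 0 := fun x => by rw [← mul_assoc, hbe, zero_mul]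
  have H2 : ∀ x : R, e * (b * x) = 0 := fun x => by rw [← mul_assoc, heb, zero_mul]
  have H3 : ∀ x : R, e * (a' * x) = a' * x := fun x => by rw [← mul_assoc, hea]
  have H4 : ∀ x : R, a' * (e * x) = a' * x := fun x => by rw [← mul_assoc, hae]
  rw [← sub_eq_zero]
  simp only [mul_sub, sub_mul, mul_add, add_mul, mul_assoc, mul_zero, zero_mul, hbe, heb,
    H1, H2, H3, H4, hae, hea, sub_zero, zero_sub, add_zero, zero_add, neg_add_rev] at key2 ⊢
  linear_combination (norm := abel) key2

theorem diagonal_parts_central_in_corners (R : Type*) [Ring R] (e : R) (he : e * e = e)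
    (htri : ∀ x : R, (1 - e) * x * e = 0) (φ₁ : R → R)
    (hφ : ∀ x y : R, φ₁ (x * y - y * x) = φ₁ x * y - y * φ₁ x + (x * φ₁ y - φ₁ y * x))
    (h0 : e * φ₁ (1 - e) * (1 - e) = 0) :
    (∀ b : R, b = (1 - e) * b * (1 - e) → ∀ a' : R, a' = e * a' * e →
      a' * (e * φ₁ b * e) = (e * φ₁ b * e) * a') ∧
    (∀ a : R, a = e * a * e → ∀ b' : R, b' = (1 - e) * b' * (1 - e) →
      (1 - e) * φ₁ a * (1 - e) * b' = b' * ((1 - e) * φ₁ a * (1 - e))) := by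
  have hqe : (1 - e) * e = 0 := by rw [sub_mul, one_mul, he, sub_self]
  have heq : e * (1 - e) = 0 := by rw [mul_sub, mul_one, he, sub_self]
  have hqq : (1 - e) * (1 - e) = 1 - e := by rw [mul_sub, mul_one, hqe, sub_zero]
  constructor
  · exact corner_comm_aux e (1 - e) he hqe heq φ₁ hφ
  · intro a ha b' hb'
    have := corner_comm_aux (1 - e) e hqq heq hqe φ₁ hφ a ha b' hb'
    rw [← mul_assoc] at this ⊢
    exact this.symm
end

section
/- Let R be a unital ring, e an idempotent with qxe = 0 for all x ∈ R, q = 1 - e, and φ₁ a multiplicative Lie derivation with eφ₁(q)q = 0. Then φ₁(e) ∈ Z(R) and φ₁(q) ∈ Z(R), and moreover φ₁(exq) = eφ₁(x)q for all x ∈ R. -/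
/-!
With `q = 1 - e`, the condition `q R e = 0` turns every commutator with `e` into a corner:
`e * y - y * e = e * y * q`. Applied to `[e, q] = 0`, the Lie derivation identity and
`e φ(q) q = 0` give that `φ(e)` commutes with `e`. Applied next to `[e, x]` and to
`[e, e x q] = e x q`, it shows that `c = [φ(e), x]` satisfies `c = 2 e c q`; compressing by
`e` and `q` forces `e c q = 0`, hence `c = 0`. Since `[q, x] = [x, e]`, centrality passes
from `φ(e)` to `φ(q)`, and `φ(e x q) = φ([e, x]) = e φ(x) q` follows.
-/

section

variable {R : Type*} [Ring R]

def IsMulLieDerivation (φ : R → R) : Prop :=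
  ∀ x y : R, φ (x * y - y * x) = φ x * y - y * φ x + (x * φ y - φ y * x)

section Corner

variable {e : R}

theorem mul_sub_mul_eq_mul_mul_one_sub (htri : ∀ x : R, (1 - e) * x * e = 0) (y : R) :
    e * y - y * e = e * y * (1 - e) :=
  calc e * y - y * e = e * y - y * e + (1 - e) * y * e := by rw [htri, add_zero]
    _ = e * y * (1 - e) := by noncomm_ring

theorem IsIdempotentElem.mul_mul_mul_one_sub_mul_one_sub (he : IsIdempotentElem e) (y : R) :
    e * (e * y * (1 - e)) * (1 - e) = e * y * (1 - e) := by
  rw [← mul_assoc, ← mul_assoc, he.eq, mul_assoc _ (1 - e), he.one_sub.eq]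

theorem IsIdempotentElem.eq_zero_of_eq_corner_add_corner (he : IsIdempotentElem e) {c : R}
    (hc : c = e * c * (1 - e) + e * c * (1 - e)) : c = 0 := by
  have hcorner : e * c * (1 - e) = 0 := by
    have h := congrArg (fun y => e * y * (1 - e)) hc
    simp only [mul_add, add_mul, he.mul_mul_mul_one_sub_mul_one_sub] at h
    exact left_eq_add.mp h
  rwa [hcorner, add_zero] at hc

theorem Commute.mul_corner_sub_corner_mul {a : R} (ha : Commute a e) (x : R) :
    a * (e * x * (1 - e)) - e * x * (1 - e) * a = e * (a * x - x * a) * (1 - e) := by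
  have hq : a * (1 - e) = (1 - e) * a := ((Commute.one_right a).sub_right ha).eq
  rw [← mul_assoc, ← mul_assoc, ha.eq, mul_assoc (e * x), ← hq]
  noncomm_ring

end Corner

namespace IsMulLieDerivation

variable {φ : R → R} {e : R}

theorem map_zero (hφ : IsMulLieDerivation φ) : φ 0 = 0 := by
  simpa using hφ 0 0

theorem map_one_sub_mem_center (hφ : IsMulLieDerivation φ) {a : R}
    (ha : φ a ∈ Set.center R) : φ (1 - a) ∈ Set.center R := by
  rw [Semigroup.mem_center_iff] at ha ⊢
  intro x
  have h := hφ (1 - a) x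
  rw [show (1 - a) * x - x * (1 - a) = x * a - a * x by noncomm_ring, hφ x a, ha x, sub_self,
    add_zero, show (1 - a) * φ x - φ x * (1 - a) = φ x * a - a * φ x by noncomm_ring,
    eq_comm, add_eq_right, sub_eq_zero] at h
  exact h.symm

theorem commute_map_self (hφ : IsMulLieDerivation φ) (he : IsIdempotentElem e)
    (htri : ∀ x : R, (1 - e) * x * e = 0) (h0 : e * φ (1 - e) * (1 - e) = 0) :
    Commute (φ e) e := by
  have h := hφ e (1 - e)
  rw [he.mul_one_sub_self, he.one_sub_mul_self, sub_self, hφ.map_zero,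
    mul_sub_mul_eq_mul_mul_one_sub htri, h0, add_zero,
    show φ e * (1 - e) - (1 - e) * φ e = e * φ e - φ e * e by noncomm_ring] at h
  exact (sub_eq_zero.mp h.symm).symm

theorem map_corner_eq (hφ : IsMulLieDerivation φ) (htri : ∀ x : R, (1 - e) * x * e = 0)
    (x : R) : φ (e * x * (1 - e)) = φ e * x - x * φ e + e * φ x * (1 - e) := by
  rw [← mul_sub_mul_eq_mul_mul_one_sub htri, hφ, mul_sub_mul_eq_mul_mul_one_sub htri]

theorem map_mem_center (hφ : IsMulLieDerivation φ) (he : IsIdempotentElem e)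
    (htri : ∀ x : R, (1 - e) * x * e = 0) (h0 : e * φ (1 - e) * (1 - e) = 0) :
    φ e ∈ Set.center R := by
  refine Semigroup.mem_center_iff.mpr fun x => (sub_eq_zero.mp ?_).symm
  set c := φ e * x - x * φ e
  apply he.eq_zero_of_eq_corner_add_corner
  have hcorner : e * (e * x * (1 - e)) - e * x * (1 - e) * e = e * x * (1 - e) := by
    rw [mul_sub_mul_eq_mul_mul_one_sub htri, he.mul_mul_mul_one_sub_mul_one_sub]
  have h := hφ e (e * x * (1 - e))
  rw [hcorner, (hφ.commute_map_self he htri h0).mul_corner_sub_corner_mul,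
    mul_sub_mul_eq_mul_mul_one_sub htri, hφ.map_corner_eq htri, mul_add, add_mul,
    he.mul_mul_mul_one_sub_mul_one_sub, ← add_assoc] at h
  exact add_right_cancel h

end IsMulLieDerivation

end

theorem image_of_idempotents_central (R : Type*) [Ring R] (e : R) (he : e * e = e)
    (htri : ∀ x : R, (1 - e) * x * e = 0) (φ₁ : R → R)
    (hφ : ∀ x y : R, φ₁ (x * y - y * x) = φ₁ x * y - y * φ₁ x + (x * φ₁ y - φ₁ y * x))
    (h0 : e * φ₁ (1 - e) * (1 - e) = 0) :
    φ₁ e ∈ Set.center R ∧ φ₁ (1 - e) ∈ Set.center R ∧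
    ∀ x : R, φ₁ (e * x * (1 - e)) = e * φ₁ x * (1 - e) := by
  have hφ' : IsMulLieDerivation φ₁ := hφ
  have hcenter : φ₁ e ∈ Set.center R := hφ'.map_mem_center he htri h0
  refine ⟨hcenter, hφ'.map_one_sub_mem_center hcenter, fun x => ?_⟩
  rw [hφ'.map_corner_eq htri, Semigroup.mem_center_iff.mp hcenter x, sub_self, zero_add]
end

section
/- Let R be a unital ring, e an idempotent with qxe = 0 for all x ∈ R, q = 1 - e, and φ₁ a multiplicative Lie derivation with eφ₁(q)q = 0. Then for a ∈ eRe and m ∈ eRq, φ₁(am) = φ₁(a)m + aφ₁(m) - mφ₁(a), and for m ∈ eRq and b ∈ qRq, φ₁(mb) = φ₁(m)b + mφ₁(b) - φ₁(b)m. -/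
theorem product_rules_on_corners (R : Type*) [Ring R] (e : R) (he : e * e = e)
    (htri : ∀ x : R, (1 - e) * x * e = 0) (φ₁ : R → R)
    (hφ : ∀ x y : R, φ₁ (x * y - y * x) = φ₁ x * y - y * φ₁ x + (x * φ₁ y - φ₁ y * x))
    (h0 : e * φ₁ (1 - e) * (1 - e) = 0) :
    (∀ a m : R, a = e * a * e → m = e * m * (1 - e) →
      φ₁ (a * m) = φ₁ a * m + a * φ₁ m - m * φ₁ a) ∧
    (∀ m b : R, m = e * m * (1 - e) → b = (1 - e) * b * (1 - e) →
      φ₁ (m * b) = φ₁ m * b + m * φ₁ b - φ₁ b * m) := by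
  set q : R := 1 - e with hq
  have hqe : q * e = 0 := by rw [hq, sub_mul, one_mul, he, sub_self]
  have heq : e * q = 0 := by rw [hq, mul_sub, mul_one, he, sub_self]
  have hqq : q * q = q := by
    rw [hq, sub_mul, one_mul, mul_sub, mul_one, he]
    abel
  have hQ : ∀ x : R, q * (x * e) = 0 := by
    intro x
    have h := htri x
    rwa [mul_assoc] at h
  constructor
  · intro a m ha hm
    have hae : a * e = a := by
      conv_lhs => rw [ha, mul_assoc, he]
      exact ha.symm
    have hea : e * a = a := by
      conv_lhs => rw [ha, ← mul_assoc, ← mul_assoc, he]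
      exact ha.symm
    have hem : e * m = m := by
      conv_lhs => rw [hm, ← mul_assoc, ← mul_assoc, he]
      exact hm.symm
    have hmq : m * q = m := by
      conv_lhs => rw [hm, mul_assoc, hqq]
      exact hm.symm
    have hme : m * e = 0 := by
      conv_lhs => rw [← hmq, mul_assoc, hqe, mul_zero]
    have hqm : q * m = 0 := by
      conv_lhs => rw [← hem, ← mul_assoc, hqe, zero_mul]
    have hqa : q * a = 0 := by
      conv_lhs => rw [← hae]
      exact hQ a
    have hma : m * a = 0 := by
      conv_lhs => rw [← hea, ← mul_assoc, hme, zero_mul]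
    have hQa : ∀ x : R, q * (x * a) = 0 := by
      intro x
      have h := hQ (x * a)
      rwa [mul_assoc, hae] at h
    have E : φ₁ m = φ₁ m * q - q * φ₁ m + (m * φ₁ q - φ₁ q * m) := by
      have h := hφ m q
      rwa [hmq, hqm, sub_zero] at h
    have key : φ₁ m * a = 0 := by
      conv_lhs => rw [E]
      rw [add_mul, sub_mul (φ₁ m * q) (q * φ₁ m) a, sub_mul (m * φ₁ q) (φ₁ q * m) a,
        mul_assoc (φ₁ m) q a, hqa, mul_zero,
        mul_assoc q (φ₁ m) a, hQa (φ₁ m), mul_assoc m (φ₁ q) a,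
        mul_assoc (φ₁ q) m a, hma, mul_zero]
      have T3 : m * (φ₁ q * a) = 0 := by
        conv_lhs => rw [← hmq, mul_assoc, hQa (φ₁ q), mul_zero]
      rw [T3]
      simp
    have h := hφ a m
    rw [hma, sub_zero, key, sub_zero] at h
    rw [h]
    abel
  · intro m b hm hb
    have hem : e * m = m := by
      conv_lhs => rw [hm, ← mul_assoc, ← mul_assoc, he]
      exact hm.symm
    have hmq : m * q = m := by
      conv_lhs => rw [hm, mul_assoc, hqq]
      exact hm.symm
    have hme : m * e = 0 := by
      conv_lhs => rw [← hmq, mul_assoc, hqe, mul_zero]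
    have hbq : b * q = b := by
      conv_lhs => rw [hb, mul_assoc, hqq]
      exact hb.symm
    have hbe : b * e = 0 := by
      conv_lhs => rw [← hbq, mul_assoc, hqe, mul_zero]
    have hbm : b * m = 0 := by
      conv_lhs => rw [← hem, ← mul_assoc, hbe, zero_mul]
    have hQm : ∀ x : R, q * (x * m) = 0 := by
      intro x
      have h := hQ x
      calc q * (x * m) = q * (x * e * m) := by
            conv_lhs => rw [← hem, ← mul_assoc x e m]
        _ = q * (x * e) * m := by rw [← mul_assoc]
        _ = 0 := by rw [h, zero_mul]
    have E2 : φ₁ m = φ₁ e * m - m * φ₁ e + (e * φ₁ m - φ₁ m * e) := by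
      have h := hφ e m
      rwa [hem, hme, sub_zero] at h
    have key2 : b * φ₁ m = 0 := by
      conv_lhs => rw [E2]
      rw [mul_add, mul_sub, mul_sub, ← mul_assoc b m (φ₁ e), hbm, zero_mul,
        ← mul_assoc b e (φ₁ m), hbe, zero_mul]
      have T1 : b * (φ₁ e * m) = 0 := by
        conv_lhs => rw [← hbq, mul_assoc, hQm (φ₁ e), mul_zero]
      have T4 : b * (φ₁ m * e) = 0 := by
        conv_lhs => rw [← hbq, mul_assoc, hQ (φ₁ m), mul_zero]
      rw [T1, T4]
      simp
    have h := hφ m b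
    rw [hbm, sub_zero, key2, sub_zero] at h
    rw [h]
    abel
end

section
/- Let R be a unital ring, e an idempotent with qxe = 0 for all x ∈ R, q = 1 - e, and φ₁ a multiplicative Lie derivation with eφ₁(q)q = 0. Then φ₁ is additive on the corner eRq: φ₁(m + m') = φ₁(m) + φ₁(m') for all m, m' ∈ eRq. -/
theorem additive_on_offdiagonal_corner (R : Type*) [Ring R] (e : R) (he : e * e = e)
    (htri : ∀ x : R, (1 - e) * x * e = 0) (φ₁ : R → R)
    (hφ : ∀ x y : R, φ₁ (x * y - y * x) = φ₁ x * y - y * φ₁ x + (x * φ₁ y - φ₁ y * x))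
    (h0 : e * φ₁ (1 - e) * (1 - e) = 0) :
    ∀ m m' : R, m = e * m * (1 - e) → m' = e * m' * (1 - e) →
      φ₁ (m + m') = φ₁ m + φ₁ m' := by
  intro m m' hm hm'
  set q : R := 1 - e with hqdef
  -- pair facts
  have hqe : q * e = 0 := by linear_combination (norm := noncomm_ring) hqdef * e - he
  have heq : e * q = 0 := by linear_combination (norm := noncomm_ring) e * hqdef - he
  have hqq : q * q = q := by linear_combination (norm := noncomm_ring) q * hqdef - hqe
  have hem : e * m = m := by
    linear_combination (norm := noncomm_ring) e * hm - hm + he * m * q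
  have hme : m * e = 0 := by
    linear_combination (norm := noncomm_ring) hm * e + e * m * hqe
  have hqm : q * m = 0 := by
    linear_combination (norm := noncomm_ring) q * hm + hqe * m * q
  have hmq : m * q = m := by
    linear_combination (norm := noncomm_ring) hm * q - hm + e * m * hqq
  have hem' : e * m' = m' := by
    linear_combination (norm := noncomm_ring) e * hm' - hm' + he * m' * q
  have hm'e : m' * e = 0 := by
    linear_combination (norm := noncomm_ring) hm' * e + e * m' * hqe
  have hqm' : q * m' = 0 := by
    linear_combination (norm := noncomm_ring) q * hm' + hqe * m' * q
  have hm'q : m' * q = m' := by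
    linear_combination (norm := noncomm_ring) hm' * q - hm' + e * m' * hqq
  have hmm' : m * m' = 0 := by
    linear_combination (norm := noncomm_ring) hm * m' + e * m * q * hm' + e * m * hqe * m' * q
  have hm'm : m' * m = 0 := by
    linear_combination (norm := noncomm_ring) hm' * m + e * m' * q * hm + e * m' * hqe * m * q
  have hmm : m * m = 0 := by
    linear_combination (norm := noncomm_ring) hm * m + e * m * q * hm + e * m * hqe * m * q
  have hm'm' : m' * m' = 0 := by
    linear_combination (norm := noncomm_ring) hm' * m' + e * m' * q * hm' + e * m' * hqe * m' * q
  -- cons versions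
  have cons : ∀ a b c : R, a * b = c → ∀ x : R, a * (b * x) = c * x := by
    intro a b c h x; rw [← mul_assoc, h]
  have he2 := cons _ _ _ he
  have hqq2 := cons _ _ _ hqq
  have heq2 := cons _ _ _ heq
  have hqe2 := cons _ _ _ hqe
  have hem2 := cons _ _ _ hem
  have hme2 := cons _ _ _ hme
  have hqm2 := cons _ _ _ hqm
  have hmq2 := cons _ _ _ hmq
  have hem'2 := cons _ _ _ hem'
  have hm'e2 := cons _ _ _ hm'e
  have hqm'2 := cons _ _ _ hqm'
  have hm'q2 := cons _ _ _ hm'q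
  have hmm'2 := cons _ _ _ hmm'
  have hm'm2 := cons _ _ _ hm'm
  have hmm2 := cons _ _ _ hmm
  have hm'm'2 := cons _ _ _ hm'm'
  have h0' : e * (φ₁ q * q) = 0 := by rw [← mul_assoc]; exact h0
  -- φ₁ 0 = 0
  have φ0 : φ₁ 0 = 0 := by have h := hφ 1 1; simpa using h
  -- bracket identities
  have hbr1 : (e + m) * (q + m') - (q + m') * (e + m) = m + m' := by
    linear_combination (norm := noncomm_ring) heq + hem' + hmq + hmm' - hqe - hqm - hm'e - hm'm
  have hbr2 : (e + m) * q - q * (e + m) = m := by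
    linear_combination (norm := noncomm_ring) heq + hmq - hqe - hqm
  have hbr3 : e * (q + m') - (q + m') * e = m' := by
    linear_combination (norm := noncomm_ring) heq + hem' - hqe - hm'e
  have hbr4 : e * q - q * e = 0 := by
    linear_combination (norm := noncomm_ring) heq - hqe
  have hbr5 : e * m' - m' * e = m' := by
    linear_combination (norm := noncomm_ring) hem' - hm'e
  have hbr6 : (e + m) * m' - m' * (e + m) = m' := by
    linear_combination (norm := noncomm_ring) hem' + hmm' - hm'e - hm'm
  have hbr7 : m * (q + m') - (q + m') * m = m := by
    linear_combination (norm := noncomm_ring) hmq + hmm' - hqm - hm'm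
  have hbr8 : m * q - q * m = m := by
    linear_combination (norm := noncomm_ring) hmq - hqm
  have hbr9 : m * m' - m' * m = 0 := by
    linear_combination (norm := noncomm_ring) hmm' - hm'm
  have hbr10 : e * (m + m') - (m + m') * e = m + m' := by
    linear_combination (norm := noncomm_ring) hem + hem' - hme - hm'e
  have hbr11 : e * m - m * e = m := by
    linear_combination (norm := noncomm_ring) hem - hme
  have hbr12 : (m + m') * q - q * (m + m') = m + m' := by
    linear_combination (norm := noncomm_ring) hmq + hm'q - hqm - hqm'
  have hbr14 : m' * q - q * m' = m' := by
    linear_combination (norm := noncomm_ring) hm'q - hqm'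
  -- φ₁ bracket identities
  have I1 := hφ (e + m) (q + m'); rw [hbr1] at I1
  have I2 := hφ (e + m) q; rw [hbr2] at I2
  have I3 := hφ e (q + m'); rw [hbr3] at I3
  have I4 := hφ e q; rw [hbr4, φ0] at I4
  have I5 := hφ e m'; rw [hbr5] at I5
  have I6 := hφ (e + m) m'; rw [hbr6] at I6
  have I7 := hφ m (q + m'); rw [hbr7] at I7
  have I8 := hφ m q; rw [hbr8] at I8
  have I9 := hφ m m'; rw [hbr9, φ0] at I9
  have I10 := hφ e (m + m'); rw [hbr10] at I10
  have I11 := hφ e m; rw [hbr11] at I11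
  have I12 := hφ (m + m') q; rw [hbr12] at I12
  have I14 := hφ m' q; rw [hbr14] at I14
  -- T = eT - Te and T = Tq - qT
  have hT1 : φ₁ (m + m') - φ₁ m - φ₁ m'
      = e * (φ₁ (m + m') - φ₁ m - φ₁ m') - (φ₁ (m + m') - φ₁ m - φ₁ m') * e := by
    conv_lhs => rw [I10, I11, I5]
    noncomm_ring
  have hT2 : φ₁ (m + m') - φ₁ m - φ₁ m'
      = (φ₁ (m + m') - φ₁ m - φ₁ m') * q - q * (φ₁ (m + m') - φ₁ m - φ₁ m') := by
    conv_lhs => rw [I12, I8, I14]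
    noncomm_ring
  have hTe : (φ₁ (m + m') - φ₁ m - φ₁ m') * e = 0 := by
    linear_combination (norm := noncomm_ring) hT2 * e + (φ₁ (m + m') - φ₁ m - φ₁ m') * hqe
      - htri (φ₁ (m + m') - φ₁ m - φ₁ m')
  have heT : e * (φ₁ (m + m') - φ₁ m - φ₁ m') = φ₁ (m + m') - φ₁ m - φ₁ m' := by
    linear_combination (norm := noncomm_ring) hTe - hT1
  have hqT : q * (φ₁ (m + m') - φ₁ m - φ₁ m') = 0 := by
    linear_combination (norm := noncomm_ring) hqe * (φ₁ (m + m') - φ₁ m - φ₁ m') - q * heT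
  have hTq : (φ₁ (m + m') - φ₁ m - φ₁ m') * q = φ₁ (m + m') - φ₁ m - φ₁ m' := by
    linear_combination (norm := noncomm_ring) hqT - hT2
  -- corner identities (multiplied by e on left, q on right)
  have J4' : e * (φ₁ e * q) = 0 := by
    have h2 := congrArg (fun x => e * x * q) I4
    simp only [mul_add, add_mul, mul_sub, sub_mul, mul_assoc, mul_zero, zero_mul, mul_one,
      one_mul, add_zero, zero_add, sub_zero, zero_sub, neg_zero, he, hqq, heq, hqe, hem, hme,
      hqm, hmq, hem', hm'e, hqm', hm'q, hmm', hm'm, hmm, hm'm', he2, hqq2, heq2, hqe2, hem2,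
      hme2, hqm2, hmq2, hem'2, hm'e2, hqm'2, hm'q2, hmm'2, hm'm2, hmm2, hm'm'2, h0'] at h2
    linear_combination (norm := abel1) - h2
  have J5' : e * (φ₁ e * m') = m' * (φ₁ e * q) := by
    have h2 := congrArg (fun x => e * x * q) I5
    simp only [mul_add, add_mul, mul_sub, sub_mul, mul_assoc, mul_zero, zero_mul, mul_one,
      one_mul, add_zero, zero_add, sub_zero, zero_sub, neg_zero, he, hqq, heq, hqe, hem, hme,
      hqm, hmq, hem', hm'e, hqm', hm'q, hmm', hm'm, hmm, hm'm', he2, hqq2, heq2, hqe2, hem2,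
      hme2, hqm2, hmq2, hem'2, hm'e2, hqm'2, hm'q2, hmm'2, hm'm2, hmm2, hm'm'2, h0', J4'] at h2 ⊢
    linear_combination (norm := abel1) - h2
  have J8' : m * (φ₁ q * q) = e * (φ₁ q * m) := by
    have h2 := congrArg (fun x => e * x * q) I8
    simp only [mul_add, add_mul, mul_sub, sub_mul, mul_assoc, mul_zero, zero_mul, mul_one,
      one_mul, add_zero, zero_add, sub_zero, zero_sub, neg_zero, he, hqq, heq, hqe, hem, hme,
      hqm, hmq, hem', hm'e, hqm', hm'q, hmm', hm'm, hmm, hm'm', he2, hqq2, heq2, hqe2, hem2,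
      hme2, hqm2, hmq2, hem'2, hm'e2, hqm'2, hm'q2, hmm'2, hm'm2, hmm2, hm'm'2, h0', J4'] at h2 ⊢
    linear_combination (norm := abel1) - h2
  have J6' : e * (φ₁ (e + m) * m') = m' * (φ₁ (e + m) * q) + e * (φ₁ m' * m) - m * (φ₁ m' * q) := by
    have h2 := congrArg (fun x => e * x * q) I6
    simp only [mul_add, add_mul, mul_sub, sub_mul, mul_assoc, mul_zero, zero_mul, mul_one,
      one_mul, add_zero, zero_add, sub_zero, zero_sub, neg_zero, he, hqq, heq, hqe, hem, hme,
      hqm, hmq, hem', hm'e, hqm', hm'q, hmm', hm'm, hmm, hm'm', he2, hqq2, heq2, hqe2, hem2,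
      hme2, hqm2, hmq2, hem'2, hm'e2, hqm'2, hm'q2, hmm'2, hm'm2, hmm2, hm'm'2, h0', J4'] at h2 ⊢
    linear_combination (norm := abel1) - h2
  have J7' : m * (φ₁ (q + m') * q) = e * (φ₁ (q + m') * m) + m' * (φ₁ m * q) - e * (φ₁ m * m') := by
    have h2 := congrArg (fun x => e * x * q) I7
    simp only [mul_add, add_mul, mul_sub, sub_mul, mul_assoc, mul_zero, zero_mul, mul_one,
      one_mul, add_zero, zero_add, sub_zero, zero_sub, neg_zero, he, hqq, heq, hqe, hem, hme,
      hqm, hmq, hem', hm'e, hqm', hm'q, hmm', hm'm, hmm, hm'm', he2, hqq2, heq2, hqe2, hem2,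
      hme2, hqm2, hmq2, hem'2, hm'e2, hqm'2, hm'q2, hmm'2, hm'm2, hmm2, hm'm'2, h0', J4'] at h2 ⊢
    linear_combination (norm := abel1) - h2
  have J9' : e * (φ₁ m * m') = m' * (φ₁ m * q) - m * (φ₁ m' * q) + e * (φ₁ m' * m) := by
    have h2 := congrArg (fun x => e * x * q) I9
    simp only [mul_add, add_mul, mul_sub, sub_mul, mul_assoc, mul_zero, zero_mul, mul_one,
      one_mul, add_zero, zero_add, sub_zero, zero_sub, neg_zero, he, hqq, heq, hqe, hem, hme,
      hqm, hmq, hem', hm'e, hqm', hm'q, hmm', hm'm, hmm, hm'm', he2, hqq2, heq2, hqe2, hem2,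
      hme2, hqm2, hmq2, hem'2, hm'e2, hqm'2, hm'q2, hmm'2, hm'm2, hmm2, hm'm'2, h0', J4'] at h2 ⊢
    linear_combination (norm := abel1) - h2
  have final : e * (φ₁ (m + m') - φ₁ m - φ₁ m') * q = 0 := by
    conv_lhs => rw [I1, I2, I3]
    simp only [mul_add, add_mul, mul_sub, sub_mul, mul_assoc, mul_zero, zero_mul, mul_one,
      one_mul, add_zero, zero_add, sub_zero, zero_sub, neg_zero, he, hqq, heq, hqe, hem, hme,
      hqm, hmq, hem', hm'e, hqm', hm'q, hmm', hm'm, hmm, hm'm', he2, hqq2, heq2, hqe2, hem2,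
      hme2, hqm2, hmq2, hem'2, hm'e2, hqm'2, hm'q2, hmm'2, hm'm2, hmm2, hm'm'2, h0', J4']
    linear_combination (norm := abel1) J6' + J7' - J8' - J5' - J9'
  have hT0 : φ₁ (m + m') - φ₁ m - φ₁ m' = 0 := by
    linear_combination (norm := noncomm_ring) final
      - e * hTq - heT
  linear_combination (norm := noncomm_ring) hT0
end

section
/- Let R be a unital ring, e an idempotent with qxe = 0 for all x ∈ R, q = 1 - e, and φ₁ a multiplicative Lie derivation with eφ₁(q)q = 0. Then for any a ∈ eRe and m ∈ eRq, the element φ₁(a + m) - φ₁(a) - φ₁(m) commutes with every element of eRq and with every element of qRq. -/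
theorem near_additivity_a_plus_m (R : Type*) [Ring R] (e : R) (he : e * e = e)
    (htri : ∀ x : R, (1 - e) * x * e = 0) (φ₁ : R → R)
    (hφ : ∀ x y : R, φ₁ (x * y - y * x) = φ₁ x * y - y * φ₁ x + (x * φ₁ y - φ₁ y * x))
    (h0 : e * φ₁ (1 - e) * (1 - e) = 0) :
    ∀ a m : R, a = e * a * e → m = e * m * (1 - e) →
      (∀ m' : R, m' = e * m' * (1 - e) →
        (φ₁ (a + m) - φ₁ a - φ₁ m) * m' = m' * (φ₁ (a + m) - φ₁ a - φ₁ m)) ∧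
      (∀ b' : R, b' = (1 - e) * b' * (1 - e) →
        (φ₁ (a + m) - φ₁ a - φ₁ m) * b' = b' * (φ₁ (a + m) - φ₁ a - φ₁ m)) := by
  intro a m ha hm
  have hqe : (1 - e) * e = 0 := by rw [sub_mul, one_mul, he, sub_self]
  have heq : e * (1 - e) = 0 := by rw [mul_sub, mul_one, he, sub_self]
  have hzero : φ₁ 0 = 0 := by
    have := hφ 0 0
    simpa using this
  constructor
  · intro m' hm'
    -- m * m' = 0 and m' * m = 0
    have hmm' : m * m' = 0 := by
      rw [hm, hm']
      have : e * m * (1 - e) * (e * m' * (1 - e))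
          = e * m * ((1 - e) * e) * (m' * (1 - e)) := by noncomm_ring
      rw [this, hqe, mul_zero, zero_mul]
    have hm'm : m' * m = 0 := by
      rw [hm, hm']
      have : e * m' * (1 - e) * (e * m * (1 - e))
          = e * m' * ((1 - e) * e) * (m * (1 - e)) := by noncomm_ring
      rw [this, hqe, mul_zero, zero_mul]
    have eqA := hφ (a + m) m'
    have eqB := hφ a m'
    have eqC := hφ m m'
    have harg : (a + m) * m' - m' * (a + m) = a * m' - m' * a := by
      rw [add_mul, mul_add, hmm', hm'm]
      abel
    rw [harg] at eqA
    have key := eqA.symm.trans eqB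
    have hargC : m * m' - m' * m = 0 := by rw [hmm', hm'm, sub_zero]
    rw [hargC, hzero] at eqC
    linear_combination (norm := noncomm_ring) key + eqC
  · intro b' hb'
    have hab' : a * b' = 0 := by
      rw [ha, hb']
      have : e * a * e * ((1 - e) * b' * (1 - e))
          = e * a * (e * (1 - e)) * (b' * (1 - e)) := by noncomm_ring
      rw [this, heq, mul_zero, zero_mul]
    have hb'a : b' * a = 0 := by
      rw [ha, hb']
      have : (1 - e) * b' * (1 - e) * (e * a * e)
          = (1 - e) * b' * ((1 - e) * e) * (a * e) := by noncomm_ring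
      rw [this, hqe, mul_zero, zero_mul]
    have hb'm : b' * m = 0 := by
      rw [hm, hb']
      have : (1 - e) * b' * (1 - e) * (e * m * (1 - e))
          = (1 - e) * b' * ((1 - e) * e) * (m * (1 - e)) := by noncomm_ring
      rw [this, hqe, mul_zero, zero_mul]
    have eqA := hφ (a + m) b'
    have eqB := hφ m b'
    have eqC := hφ a b'
    have harg : (a + m) * b' - b' * (a + m) = m * b' - b' * m := by
      rw [add_mul, mul_add, hab', hb'a, hb'm]
      abel
    rw [harg] at eqA
    have key := eqA.symm.trans eqB
    have hargC : a * b' - b' * a = 0 := by rw [hab', hb'a, sub_zero]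
    rw [hargC, hzero] at eqC
    linear_combination (norm := noncomm_ring) key + eqC
end

section
/- Let R be a unital ring, e an idempotent with qxe = 0 for all x ∈ R, q = 1 - e, and φ₁ a multiplicative Lie derivation with eφ₁(q)q = 0. Then for any a ∈ eRe and b ∈ qRq, the element c = φ₁(a+b) - φ₁(a) - φ₁(b) is central: [c, x] = 0 for all x ∈ R. -/
private lemma phi_zero {R : Type*} [Ring R] (φ₁ : R → R)
    (hφ : ∀ x y : R, φ₁ (x * y - y * x) = φ₁ x * y - y * φ₁ x + (x * φ₁ y - φ₁ y * x)) :
    φ₁ 0 = 0 := by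
  have h := hφ 0 0
  simpa using h

private lemma mfacts {R : Type*} [Ring R] (e m : R) (he : e * e = e)
    (hm : m = e * m * (1 - e)) :
    e * m = m ∧ m * (1 - e) = m ∧ m * e = 0 ∧ (1 - e) * m = 0 := by
  have hqe : (1 - e) * e = 0 := by rw [sub_mul, one_mul, he, sub_self]
  have hq2 : (1 - e) * (1 - e) = 1 - e := by rw [mul_sub, mul_one, hqe, sub_zero]
  refine ⟨?_, ?_, ?_, ?_⟩
  · rw [hm, ← mul_assoc, ← mul_assoc, he]
  · rw [hm, mul_assoc, hq2]
  · rw [hm, mul_assoc, hqe, mul_zero]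
  · rw [hm, ← mul_assoc, ← mul_assoc, hqe, zero_mul, zero_mul]

private lemma M_add {R : Type*} [Ring R] (e : R) (he : e * e = e) (φ₁ : R → R)
    (hφ : ∀ x y : R, φ₁ (x * y - y * x) = φ₁ x * y - y * φ₁ x + (x * φ₁ y - φ₁ y * x))
    (m n : R) (hm : m = e * m * (1 - e)) (hn : n = e * n * (1 - e)) :
    φ₁ (m + n) = φ₁ m + φ₁ n := by
  have phi0 := phi_zero φ₁ hφ
  have hqe : (1 - e) * e = 0 := by rw [sub_mul, one_mul, he, sub_self]
  have heq : e * (1 - e) = 0 := by rw [mul_sub, mul_one, he, sub_self]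
  obtain ⟨hem, hmq, hme, hqm⟩ := mfacts e m he hm
  obtain ⟨hen, hnq, hne, hqn⟩ := mfacts e n he hn
  have hmn : m * n = 0 := by rw [← hen, ← mul_assoc, hme, zero_mul]
  have hnm : n * m = 0 := by rw [← hem, ← mul_assoc, hne, zero_mul]
  have key1 : (e + m) * ((1 - e) + n) - ((1 - e) + n) * (e + m) = m + n := by
    linear_combination (norm := noncomm_ring) heq + hen + hmq + hmn - hqe - hqm - hne - hnm
  have key2 : m * ((1 - e) + n) - ((1 - e) + n) * m = m := by
    linear_combination (norm := noncomm_ring) hmq + hmn - hqm - hnm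
  have key3 : e * ((1 - e) + n) - ((1 - e) + n) * e = n := by
    linear_combination (norm := noncomm_ring) heq + hen - hqe - hne
  have key4 : (1 - e) * (e + m) - (e + m) * (1 - e) = -m := by
    linear_combination (norm := noncomm_ring) hqe + hqm - heq - hmq
  have key5 : (1 - e) * m - m * (1 - e) = -m := by
    linear_combination (norm := noncomm_ring) hqm - hmq
  have key6 : (1 - e) * e - e * (1 - e) = 0 := by
    linear_combination (norm := noncomm_ring) hqe - heq
  have key7 : (e + m) * n - n * (e + m) = n := by
    linear_combination (norm := noncomm_ring) hen + hmn - hne - hnm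
  have key8 : m * n - n * m = 0 := by
    linear_combination (norm := noncomm_ring) hmn - hnm
  have key9 : e * n - n * e = n := by
    linear_combination (norm := noncomm_ring) hen - hne
  have hA := hφ (e + m) ((1 - e) + n); rw [key1] at hA
  have hB := hφ m ((1 - e) + n); rw [key2] at hB
  have hC := hφ e ((1 - e) + n); rw [key3] at hC
  have hD := hφ (1 - e) (e + m); rw [key4] at hD
  have hE := hφ (1 - e) m; rw [key5] at hE
  have hF := hφ (1 - e) e; rw [key6, phi0] at hF
  have hG := hφ (e + m) n; rw [key7] at hG
  have hH := hφ m n; rw [key8, phi0] at hH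
  have hI := hφ e n; rw [key9] at hI
  linear_combination (norm := noncomm_ring) hA - hB - hC + hD - hE - hF - hG + hH + hI

theorem near_additivity_a_plus_b_central (R : Type*) [Ring R] (e : R) (he : e * e = e)
    (htri : ∀ x : R, (1 - e) * x * e = 0) (φ₁ : R → R)
    (hφ : ∀ x y : R, φ₁ (x * y - y * x) = φ₁ x * y - y * φ₁ x + (x * φ₁ y - φ₁ y * x))
    (h0 : e * φ₁ (1 - e) * (1 - e) = 0) :
    ∀ a b : R, a = e * a * e → b = (1 - e) * b * (1 - e) →
      ∀ x : R, (φ₁ (a + b) - φ₁ a - φ₁ b) * x - x * (φ₁ (a + b) - φ₁ a - φ₁ b) = 0 := by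
  intro a b ha hb x
  have phi0 := phi_zero φ₁ hφ
  have hqe : (1 - e) * e = 0 := by rw [sub_mul, one_mul, he, sub_self]
  have heq : e * (1 - e) = 0 := by rw [mul_sub, mul_one, he, sub_self]
  have hq2 : (1 - e) * (1 - e) = 1 - e := by rw [mul_sub, mul_one, hqe, sub_zero]
  -- facts about a
  have hea : e * a = a := by rw [ha, ← mul_assoc, ← mul_assoc, he]
  have hae : a * e = a := by rw [ha, mul_assoc, he]
  have haq : a * (1 - e) = 0 := by rw [ha, mul_assoc, heq, mul_zero]
  have hqa : (1 - e) * a = 0 := by rw [ha, ← mul_assoc, ← mul_assoc, hqe, zero_mul, zero_mul]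
  -- facts about b
  have hqb : (1 - e) * b = b := by rw [hb, ← mul_assoc, ← mul_assoc, hq2]
  have hbq : b * (1 - e) = b := by rw [hb, mul_assoc, hq2]
  have heb : e * b = 0 := by rw [hb, ← mul_assoc, ← mul_assoc, heq, zero_mul, zero_mul]
  have hbe : b * e = 0 := by rw [hb, mul_assoc, hqe, mul_zero]
  -- decomposition of x
  obtain ⟨x₁, hx₁⟩ : ∃ y, y = e * x * e := ⟨_, rfl⟩
  obtain ⟨x₂, hx₂⟩ : ∃ y, y = e * x * (1 - e) := ⟨_, rfl⟩
  obtain ⟨x₃, hx₃⟩ : ∃ y, y = (1 - e) * x * (1 - e) := ⟨_, rfl⟩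
  have hx : x = x₁ + x₂ + x₃ := by
    rw [hx₁, hx₂, hx₃]
    linear_combination (norm := noncomm_ring) htri x
  -- facts about x₁
  have hex₁ : e * x₁ = x₁ := by rw [hx₁, ← mul_assoc, ← mul_assoc, he]
  have hx₁e : x₁ * e = x₁ := by rw [hx₁, mul_assoc, he]
  -- facts about x₂
  have hex₂ : e * x₂ = x₂ := by rw [hx₂, ← mul_assoc, ← mul_assoc, he]
  have hx₂q : x₂ * (1 - e) = x₂ := by rw [hx₂, mul_assoc, hq2]
  have hx₂e : x₂ * e = 0 := by rw [hx₂, mul_assoc, hqe, mul_zero]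
  -- facts about x₃
  have hqx₃ : (1 - e) * x₃ = x₃ := by rw [hx₃, ← mul_assoc, ← mul_assoc, hq2]
  have hx₃e : x₃ * e = 0 := by rw [hx₃, mul_assoc, hqe, mul_zero]
  -- mixed products
  have hbx₁ : b * x₁ = 0 := by rw [← hex₁, ← mul_assoc, hbe, zero_mul]
  have hx₁b : x₁ * b = 0 := by rw [← hx₁e, mul_assoc, heb, mul_zero]
  have hax₃ : a * x₃ = 0 := by rw [← hqx₃, ← mul_assoc, haq, zero_mul]
  have hx₃a : x₃ * a = 0 := by rw [← hea, ← mul_assoc, hx₃e, zero_mul]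
  have hbx₂ : b * x₂ = 0 := by rw [← hex₂, ← mul_assoc, hbe, zero_mul]
  have hx₂a : x₂ * a = 0 := by rw [← hea, ← mul_assoc, hx₂e, zero_mul]
  have hx₂b : x₂ * b = e * (x₂ * b) * (1 - e) := by
    have h : e * (x₂ * b) * (1 - e) = x₂ * b := by rw [← mul_assoc, hex₂, mul_assoc, hbq]
    exact h.symm
  have hax₂M : a * x₂ = e * (a * x₂) * (1 - e) := by
    have h : e * (a * x₂) * (1 - e) = a * x₂ := by rw [← mul_assoc, hea, mul_assoc, hx₂q]
    exact h.symm
  have hnx₂M : -(x₂ * b) = e * (-(x₂ * b)) * (1 - e) := by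
    rw [mul_neg, neg_mul, ← hx₂b]
  -- piece 1 : commutator with x₁
  have k1 : (a + b) * x₁ - x₁ * (a + b) = a * x₁ - x₁ * a := by
    linear_combination (norm := noncomm_ring) hbx₁ - hx₁b
  have k2 : b * x₁ - x₁ * b = 0 := by
    linear_combination (norm := noncomm_ring) hbx₁ - hx₁b
  have hA1 := hφ (a + b) x₁; rw [k1] at hA1
  have hB1 := hφ a x₁
  have hC1 := hφ b x₁; rw [k2, phi0] at hC1
  have h1 : (φ₁ (a + b) - φ₁ a - φ₁ b) * x₁ - x₁ * (φ₁ (a + b) - φ₁ a - φ₁ b) = 0 := by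
    linear_combination (norm := noncomm_ring) hB1 + hC1 - hA1
  -- piece 3 : commutator with x₃
  have k3 : (a + b) * x₃ - x₃ * (a + b) = b * x₃ - x₃ * b := by
    linear_combination (norm := noncomm_ring) hax₃ - hx₃a
  have k4 : a * x₃ - x₃ * a = 0 := by
    linear_combination (norm := noncomm_ring) hax₃ - hx₃a
  have hA3 := hφ (a + b) x₃; rw [k3] at hA3
  have hB3 := hφ a x₃; rw [k4, phi0] at hB3
  have hC3 := hφ b x₃
  have h3 : (φ₁ (a + b) - φ₁ a - φ₁ b) * x₃ - x₃ * (φ₁ (a + b) - φ₁ a - φ₁ b) = 0 := by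
    linear_combination (norm := noncomm_ring) hB3 + hC3 - hA3
  -- piece 2 : commutator with x₂
  have k5 : (a + b) * x₂ - x₂ * (a + b) = a * x₂ + -(x₂ * b) := by
    linear_combination (norm := noncomm_ring) hbx₂ - hx₂a
  have k6 : a * x₂ - x₂ * a = a * x₂ := by
    linear_combination (norm := noncomm_ring) - hx₂a
  have k7 : b * x₂ - x₂ * b = -(x₂ * b) := by
    linear_combination (norm := noncomm_ring) hbx₂
  have hM := M_add e he φ₁ hφ (a * x₂) (-(x₂ * b)) hax₂M hnx₂M
  have hA2 := hφ (a + b) x₂; rw [k5] at hA2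
  have hB2 := hφ a x₂; rw [k6] at hB2
  have hC2 := hφ b x₂; rw [k7] at hC2
  have h2 : (φ₁ (a + b) - φ₁ a - φ₁ b) * x₂ - x₂ * (φ₁ (a + b) - φ₁ a - φ₁ b) = 0 := by
    linear_combination (norm := noncomm_ring) hB2 + hC2 - hA2 + hM
  -- assemble
  rw [hx]
  linear_combination (norm := noncomm_ring) h1 + h2 + h3
end

section
/- In a triangular 3-matrix ring T = T₃(R_i; M_{ij}), if x ∈ T satisfies [x, y] ∈ Z(T) for all y ∈ T, then x ∈ Z(T). -/
/-- In a triangular 3-matrix ring, an element whose commutators all land in the center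
is itself central. -/
theorem commutators_central_implies_central (T : Type*) [Ring T] (Q : Fin 3 → T)
    (hidem : ∀ i, Q i * Q i = Q i)
    (horth : ∀ i j, i ≠ j → Q i * Q j = 0)
    (hsum : Q 0 + Q 1 + Q 2 = 1)
    (hlower : ∀ i j : Fin 3, j < i → ∀ x : T, Q i * x * Q j = 0)
    (hfaithL : ∀ i j : Fin 3, i < j → ∀ a : T, a = Q i * a * Q i →
      (∀ m : T, a * (Q i * m * Q j) = 0) → a = 0)
    (hfaithR : ∀ i j : Fin 3, i < j → ∀ b : T, b = Q j * b * Q j →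
      (∀ m : T, (Q i * m * Q j) * b = 0) → b = 0) :
    ∀ x : T, (∀ y : T, x * y - y * x ∈ Set.center T) → x ∈ Set.center T := by
  intro x hx
  have hc : ∀ y g : T, g * (x * y - y * x) = (x * y - y * x) * g := by
    intro y g
    exact (Semigroup.mem_center_iff.mp (hx y)) g
  have h3 : ∀ i : Fin 3, i = 0 ∨ i = 1 ∨ i = 2 := by decide
  have hsum' : ∑ j : Fin 3, Q j = 1 := by
    rw [Fin.sum_univ_three]; exact hsum
  -- helper assoc lemmas
  have mo : ∀ i j : Fin 3, i ≠ j → ∀ t : T, Q i * (Q j * t) = 0 := by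
    intro i j h t; rw [← mul_assoc, horth i j h, zero_mul]
  have mir : ∀ (i : Fin 3) (t : T), t * Q i * Q i = t * Q i := by
    intro i t; rw [mul_assoc, hidem]
  -- off-diagonal components of x vanish
  have hoff : ∀ i j : Fin 3, i ≠ j → Q i * x * Q j = 0 := by
    intro i j hij
    have h2 := congrArg (· * Q j) (hc (Q j) (Q i))
    simp only [sub_mul, mul_sub, mul_assoc, hidem, horth i j hij, mo i j hij,
      mul_zero, zero_mul, sub_zero, zero_sub] at h2
    rw [mul_assoc]
    exact h2
  -- x commutes with each Q i
  have hdl : ∀ i : Fin 3, Q i * x = Q i * x * Q i := by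
    intro i
    calc Q i * x = Q i * x * (∑ j : Fin 3, Q j) := by rw [hsum', mul_one]
      _ = ∑ j : Fin 3, Q i * x * Q j := by rw [Finset.mul_sum]
      _ = Q i * x * Q i := Fintype.sum_eq_single i (fun j hj => hoff i j hj.symm)
  have hdr : ∀ i : Fin 3, x * Q i = Q i * x * Q i := by
    intro i
    calc x * Q i = (∑ j : Fin 3, Q j) * x * Q i := by rw [hsum', one_mul]
      _ = ∑ j : Fin 3, Q j * x * Q i := by rw [Finset.sum_mul, Finset.sum_mul]
      _ = Q i * x * Q i := Fintype.sum_eq_single i (fun j hj => hoff j i hj)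
  have hcomm : ∀ i : Fin 3, Q i * x = x * Q i := by
    intro i; rw [hdl i, ← hdr i]
  -- any central element concentrated in a diagonal corner is zero
  have hkill : ∀ c : T, (∀ g : T, g * c = c * g) → ∀ i : Fin 3,
      c = Q i * c * Q i → c = 0 := by
    intro c hcen i hci
    rcases h3 i with rfl | rfl | rfl
    · refine hfaithL 0 1 (by decide) c hci ?_
      intro m
      rw [← hcen (Q 0 * m * Q 1), hci, mul_assoc (Q 0 * m) (Q 1),
        mul_assoc (Q 0) c (Q 0), mo 1 0 (by decide), mul_zero]
    · refine hfaithL 1 2 (by decide) c hci ?_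
      intro m
      rw [← hcen (Q 1 * m * Q 2), hci, mul_assoc (Q 1 * m) (Q 2),
        mul_assoc (Q 1) c (Q 1), mo 2 1 (by decide), mul_zero]
    · refine hfaithR 0 2 (by decide) c hci ?_
      intro m
      rw [hcen (Q 0 * m * Q 2), hci, mul_assoc (Q 2 * c) (Q 2),
        mul_assoc (Q 0) m (Q 2), mo 2 0 (by decide), mul_zero]
  rw [Semigroup.mem_center_iff]
  intro y
  suffices h : x * y - y * x = 0 by
    have := sub_eq_zero.mp h
    rw [this]
  -- diagonal components of the commutator vanish
  have hdiag : ∀ i : Fin 3, Q i * (x * y - y * x) * Q i = 0 := by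
    intro i
    have key : Q i * (x * y - y * x) * Q i
        = x * (Q i * y * Q i) - (Q i * y * Q i) * x := by
      simp only [mul_sub, sub_mul]
      congr 1
      · rw [← mul_assoc, ← mul_assoc, hcomm i, mul_assoc x (Q i) y,
          mul_assoc x (Q i * y) (Q i)]
      · rw [mul_assoc (Q i) (y * x) (Q i), mul_assoc y x (Q i), ← hcomm i,
          ← mul_assoc y (Q i) x, ← mul_assoc (Q i) (y * Q i) x, ← mul_assoc]
    rw [key]
    refine hkill _ (hc (Q i * y * Q i)) i ?_
    rw [← key]
    conv_rhs => rw [← mul_assoc (Q i) (Q i * (x * y - y * x)),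
      ← mul_assoc (Q i) (Q i), hidem, mir]
  -- off-diagonal components of the commutator vanish
  have hoffc : ∀ i j : Fin 3, i ≠ j → Q i * (x * y - y * x) * Q j = 0 := by
    intro i j hij
    rw [hc y (Q i), mul_assoc, horth i j hij, mul_zero]
  have h9 : (Q 0 + Q 1 + Q 2) * (x * y - y * x) * (Q 0 + Q 1 + Q 2) = 0 := by
    simp only [add_mul, mul_add]
    rw [hdiag 0, hdiag 1, hdiag 2, hoffc 0 1 (by decide), hoffc 0 2 (by decide),
      hoffc 1 0 (by decide), hoffc 1 2 (by decide), hoffc 2 0 (by decide),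
      hoffc 2 1 (by decide)]
    abel
  rw [hsum, one_mul, mul_one] at h9
  exact h9
end

section
/- Let R be a unital ring and let A ⊆ M₆(R) be the subring of 6×6 matrices of the following block form: an arbitrary 2×2 block A₁₁ in positions (1,2)×(1,2), scalar blocks a·I₂ in positions (3,4)×(3,4) and b·I₂ in positions (5,6)×(5,6) (with a, b ∈ R), arbitrary entries a₁₄, a₂₄ in column 4, rows 1–2, arbitrary entries a₁₆, a₂₆, a₃₆ in column 6, rows 1–3, and zeros in all remaining positions. Then the center of A is {z·I₆ : z ∈ Z(R)}. -/
/-- The allowed (possibly nonzero) positions for matrices in the subring `A ⊆ M₆(R)`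
of Example 2.1. -/
def exampleAllowed : Set (Fin 6 × Fin 6) :=
  {(0,0), (0,1), (1,0), (1,1), (0,3), (1,3), (0,5), (1,5), (2,5), (2,2), (3,3), (4,4), (5,5)}

/-- Membership in the subring `A` of Example 2.1. -/
def exampleMem {R : Type*} [Ring R] (M : Matrix (Fin 6) (Fin 6) R) : Prop :=
  (∀ i j : Fin 6, (i, j) ∉ exampleAllowed → M i j = 0) ∧ M 2 2 = M 3 3 ∧ M 4 4 = M 5 5

section exampleAux

variable {R : Type*} [Ring R]

lemma exampleDiag_allowed (i : Fin 6) : (i, i) ∈ exampleAllowed := by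
  fin_cases i <;> simp [exampleAllowed]

lemma exampleMem_pair23 :
    exampleMem (Matrix.single (2:Fin 6) 2 (1:R) + Matrix.single 3 3 1) := by
  refine ⟨fun a b hab => ?_, ?_, ?_⟩
  · rw [Matrix.add_apply,
      Matrix.single_apply_of_ne 2 2 1 a b (by
        rintro ⟨rfl, rfl⟩
        exact hab (by simp [exampleAllowed])),
      Matrix.single_apply_of_ne 3 3 1 a b (by
        rintro ⟨rfl, rfl⟩
        exact hab (by simp [exampleAllowed])), add_zero]
  · rw [Matrix.add_apply, Matrix.add_apply, Matrix.single_apply_same,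
      Matrix.single_apply_same,
      Matrix.single_apply_of_ne 3 3 1 2 2 (by decide),
      Matrix.single_apply_of_ne 2 2 1 3 3 (by decide)]
    rw [add_zero, zero_add]
  · rw [Matrix.add_apply, Matrix.add_apply,
      Matrix.single_apply_of_ne 2 2 1 4 4 (by decide),
      Matrix.single_apply_of_ne 3 3 1 4 4 (by decide),
      Matrix.single_apply_of_ne 2 2 1 5 5 (by decide),
      Matrix.single_apply_of_ne 3 3 1 5 5 (by decide)]

lemma exampleMem_stdBasis (i j : Fin 6) (r : R) (h : (i, j) ∈ exampleAllowed)
    (h2 : (i, j) ≠ (2, 2)) (h3 : (i, j) ≠ (3, 3)) (h4 : (i, j) ≠ (4, 4))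
    (h5 : (i, j) ≠ (5, 5)) :
    exampleMem (Matrix.single i j r) := by
  refine ⟨fun a b hab => ?_, ?_, ?_⟩
  · apply Matrix.single_apply_of_ne
    rintro ⟨rfl, rfl⟩
    exact hab h
  · rw [Matrix.single_apply_of_ne i j r 2 2 (by rintro ⟨rfl, rfl⟩; exact h2 rfl),
      Matrix.single_apply_of_ne i j r 3 3 (by rintro ⟨rfl, rfl⟩; exact h3 rfl)]
  · rw [Matrix.single_apply_of_ne i j r 4 4 (by rintro ⟨rfl, rfl⟩; exact h4 rfl),
      Matrix.single_apply_of_ne i j r 5 5 (by rintro ⟨rfl, rfl⟩; exact h5 rfl)]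

lemma exampleMem_pair45 :
    exampleMem (Matrix.single (4:Fin 6) 4 (1:R) + Matrix.single 5 5 1) := by
  refine ⟨fun a b hab => ?_, ?_, ?_⟩
  · rw [Matrix.add_apply,
      Matrix.single_apply_of_ne 4 4 1 a b (by
        rintro ⟨rfl, rfl⟩
        exact hab (by simp [exampleAllowed])),
      Matrix.single_apply_of_ne 5 5 1 a b (by
        rintro ⟨rfl, rfl⟩
        exact hab (by simp [exampleAllowed])), add_zero]
  · rw [Matrix.add_apply, Matrix.add_apply,
      Matrix.single_apply_of_ne 4 4 1 2 2 (by decide),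
      Matrix.single_apply_of_ne 5 5 1 2 2 (by decide),
      Matrix.single_apply_of_ne 4 4 1 3 3 (by decide),
      Matrix.single_apply_of_ne 5 5 1 3 3 (by decide)]
  · rw [Matrix.add_apply, Matrix.add_apply, Matrix.single_apply_same,
      Matrix.single_apply_same,
      Matrix.single_apply_of_ne 5 5 1 4 4 (by decide),
      Matrix.single_apply_of_ne 4 4 1 5 5 (by decide)]
    rw [add_zero, zero_add]

end exampleAux

/-- The center of the triangular 3-matrix ring `A` of Example 2.1 consists exactly of the
central scalar matrices `z • I₆`, `z ∈ Z(R)`. -/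
theorem example_ring_center (R : Type*) [Ring R] :
    {M : Matrix (Fin 6) (Fin 6) R | exampleMem M ∧ ∀ N, exampleMem N → M * N = N * M} =
      {M : Matrix (Fin 6) (Fin 6) R |
        ∃ z ∈ Set.center R, M = z • (1 : Matrix (Fin 6) (Fin 6) R)} := by
  ext M
  simp only [Set.mem_setOf_eq]
  constructor
  · rintro ⟨⟨hz, h23, h45⟩, hc⟩
    have key : ∀ (i j : Fin 6) (r : R), exampleMem (Matrix.single i j r) →
        ∀ a b : Fin 6, (M * Matrix.single i j r) a b =
          (Matrix.single i j r * M) a b := by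
      intro i j r hN a b
      rw [hc _ hN]
    have e10 : M 1 0 = 0 := by
      have := key 0 0 1 (exampleMem_stdBasis 0 0 1 (by simp [exampleAllowed])
        (by decide) (by decide) (by decide) (by decide)) 1 0
      simpa [Matrix.mul_apply, Fin.sum_univ_six] using this
    have e01 : M 0 1 = 0 := by
      have := key 1 1 1 (exampleMem_stdBasis 1 1 1 (by simp [exampleAllowed])
        (by decide) (by decide) (by decide) (by decide)) 0 1
      simpa [Matrix.mul_apply, Fin.sum_univ_six] using this
    have e11 : M 1 1 = M 0 0 := by
      have := key 0 1 1 (exampleMem_stdBasis 0 1 1 (by simp [exampleAllowed])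
        (by decide) (by decide) (by decide) (by decide)) 0 1
      simpa [Matrix.mul_apply, Fin.sum_univ_six] using this.symm
    have e33 : M 3 3 = M 0 0 := by
      have := key 0 3 1 (exampleMem_stdBasis 0 3 1 (by simp [exampleAllowed])
        (by decide) (by decide) (by decide) (by decide)) 0 3
      simpa [Matrix.mul_apply, Fin.sum_univ_six] using this.symm
    have e55 : M 5 5 = M 0 0 := by
      have := key 0 5 1 (exampleMem_stdBasis 0 5 1 (by simp [exampleAllowed])
        (by decide) (by decide) (by decide) (by decide)) 0 5
      simpa [Matrix.mul_apply, Fin.sum_univ_six] using this.symm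
    have p23 := hc _ (exampleMem_pair23 (R := R))
    have e03 : M 0 3 = 0 := by
      have := congrFun (congrFun p23 0) 3
      simpa [Matrix.mul_apply, Fin.sum_univ_six, Matrix.add_apply] using this
    have e13 : M 1 3 = 0 := by
      have := congrFun (congrFun p23 1) 3
      simpa [Matrix.mul_apply, Fin.sum_univ_six, Matrix.add_apply] using this
    have p45 := hc _ (exampleMem_pair45 (R := R))
    have e05 : M 0 5 = 0 := by
      have := congrFun (congrFun p45 0) 5
      simpa [Matrix.mul_apply, Fin.sum_univ_six, Matrix.add_apply] using this
    have e15 : M 1 5 = 0 := by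
      have := congrFun (congrFun p45 1) 5
      simpa [Matrix.mul_apply, Fin.sum_univ_six, Matrix.add_apply] using this
    have e25 : M 2 5 = 0 := by
      have := congrFun (congrFun p45 2) 5
      simpa [Matrix.mul_apply, Fin.sum_univ_six, Matrix.add_apply] using this
    have hcen : M 0 0 ∈ Set.center R := by
      rw [Semigroup.mem_center_iff]
      intro r
      have := key 0 0 r (exampleMem_stdBasis 0 0 r (by simp [exampleAllowed])
        (by decide) (by decide) (by decide) (by decide)) 0 0
      simpa [Matrix.mul_apply, Fin.sum_univ_six] using this.symm
    refine ⟨M 0 0, hcen, ?_⟩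
    ext a b
    rw [Matrix.smul_apply, Matrix.one_apply]
    by_cases hab : a = b
    · subst hab
      rw [if_pos rfl, smul_eq_mul, mul_one]
      fin_cases a
      · rfl
      · exact e11
      · exact h23.trans e33
      · exact e33
      · exact h45.trans e55
      · exact e55
    · rw [if_neg hab, smul_zero]
      by_cases hm : (a, b) ∈ exampleAllowed
      · simp only [exampleAllowed, Set.mem_insert_iff, Set.mem_singleton_iff,
          Prod.mk.injEq] at hm
        rcases hm with ⟨rfl,rfl⟩|⟨rfl,rfl⟩|⟨rfl,rfl⟩|⟨rfl,rfl⟩|⟨rfl,rfl⟩|⟨rfl,rfl⟩|⟨rfl,rfl⟩|⟨rfl,rfl⟩|⟨rfl,rfl⟩|⟨rfl,rfl⟩|⟨rfl,rfl⟩|⟨rfl,rfl⟩|⟨rfl,rfl⟩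
        · exact absurd rfl hab
        · exact e01
        · exact e10
        · exact absurd rfl hab
        · exact e03
        · exact e13
        · exact e05
        · exact e15
        · exact e25
        · exact absurd rfl hab
        · exact absurd rfl hab
        · exact absurd rfl hab
        · exact absurd rfl hab
      · exact hz a b hm
  · rintro ⟨z, hzc, rfl⟩
    refine ⟨⟨fun i j h => ?_, by simp, by simp⟩, fun N hN => ?_⟩
    · rw [Matrix.smul_apply]
      have hij : i ≠ j := fun hij => h (hij ▸ exampleDiag_allowed i)
      rw [Matrix.one_apply_ne hij, smul_zero]
    · ext a b
      simp only [Matrix.mul_apply, Matrix.smul_apply, Matrix.one_apply, smul_eq_mul,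
        mul_ite, ite_mul, mul_zero, zero_mul, mul_one, one_mul,
        Finset.sum_ite_eq, Finset.sum_ite_eq', Finset.mem_univ, if_true]
      exact hzc.comm (N a b)
end

section
/- Let R be a unital ring, e an idempotent with qxe = 0 for all x ∈ R, q = 1 - e. Suppose δ : R → R preserves the three corners (δ(eRe) ⊆ eRe, δ(eRq) ⊆ eRq, δ(qRq) ⊆ qRq), is additive on each corner, restricts to a ring derivation on eRe and on qRq, and satisfies δ(am) = δ(a)m + aδ(m) and δ(mb) = δ(m)b + mδ(b) for all a ∈ eRe, m ∈ eRq, b ∈ qRq. Then δ is an additive derivation of R: δ(x+y) = δ(x) + δ(y) and δ(xy) = δ(x)y + xδ(y) for all x, y ∈ R. -/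
theorem corner_derivation_is_derivation (R : Type*) [Ring R] (e : R) (he : e * e = e)
    (htri : ∀ x : R, (1 - e) * x * e = 0) (δ : R → R)
    (hpres_e : ∀ a : R, a = e * a * e → δ a = e * δ a * e)
    (hpres_m : ∀ m : R, m = e * m * (1 - e) → δ m = e * δ m * (1 - e))
    (hpres_q : ∀ b : R, b = (1 - e) * b * (1 - e) → δ b = (1 - e) * δ b * (1 - e))
    (hadd_e : ∀ a a' : R, a = e * a * e → a' = e * a' * e → δ (a + a') = δ a + δ a')
    (hadd_m : ∀ m m' : R, m = e * m * (1 - e) → m' = e * m' * (1 - e) → δ (m + m') = δ m + δ m')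
    (hadd_q : ∀ b b' : R, b = (1 - e) * b * (1 - e) → b' = (1 - e) * b' * (1 - e) →
      δ (b + b') = δ b + δ b')
    (hder_e : ∀ a a' : R, a = e * a * e → a' = e * a' * e → δ (a * a') = δ a * a' + a * δ a')
    (hder_q : ∀ b b' : R, b = (1 - e) * b * (1 - e) → b' = (1 - e) * b' * (1 - e) →
      δ (b * b') = δ b * b' + b * δ b')
    (hder_am : ∀ a m : R, a = e * a * e → m = e * m * (1 - e) → δ (a * m) = δ a * m + a * δ m)
    (hder_mb : ∀ m b : R, m = e * m * (1 - e) → b = (1 - e) * b * (1 - e) →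
      δ (m * b) = δ m * b + m * δ b)
    (hext : ∀ x : R, δ x = δ (e * x * e) + δ (e * x * (1 - e)) + δ ((1 - e) * x * (1 - e))) :
    (∀ x y : R, δ (x + y) = δ x + δ y) ∧ (∀ x y : R, δ (x * y) = δ x * y + x * δ y) := by
  have heq : e * (1 - e) = 0 := by rw [mul_sub, mul_one, he, sub_self]
  have hqe : (1 - e) * e = 0 := by rw [sub_mul, one_mul, he, sub_self]
  have hqq : (1 - e) * (1 - e) = (1 - e) := by rw [mul_sub, mul_one, hqe, sub_zero]
  have s1 : ∀ z : R, e * (e * z) = e * z := fun z => by rw [← mul_assoc, he]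
  have s4 : ∀ z : R, (1 - e) * ((1 - e) * z) = (1 - e) * z := fun z => by rw [← mul_assoc, hqq]
  have ze : ∀ z : R, e * ((1 - e) * z) = 0 := fun z => by rw [← mul_assoc, heq, zero_mul]
  have zq : ∀ z : R, (1 - e) * (e * z) = 0 := fun z => by rw [← mul_assoc, hqe, zero_mul]
  have s5 : ∀ z : R, e * (z * e) = z * e := fun z => by
    have h := htri z
    rw [sub_mul, one_mul, sub_mul, sub_eq_zero] at h
    rw [← mul_assoc, ← h]
  have s8 : ∀ z w : R, (1 - e) * (z * (e * w)) = 0 := fun z w => by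
    rw [← mul_assoc, ← mul_assoc, htri z, zero_mul]
  have hone : e + (1 - e) = (1 : R) := by abel
  have hsplit : ∀ z : R, z = e * z + (1 - e) * z := fun z => by
    rw [← add_mul, hone, one_mul]
  have hsplit' : ∀ z : R, z = z * e + z * (1 - e) := fun z => by
    rw [← mul_add, hone, mul_one]
  have hdec : ∀ z : R, z = e * z * e + e * z * (1 - e) + (1 - e) * z * (1 - e) := fun z => by
    conv_lhs => rw [hsplit z, hsplit' (e * z), hsplit' ((1 - e) * z)]
    rw [htri z]
    abel
  -- corner membership of the projections
  have cE : ∀ x : R, e * x * e = e * (e * x * e) * e := fun x => by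
    simp only [mul_assoc, s1, he]
  have cM : ∀ x : R, e * x * (1 - e) = e * (e * x * (1 - e)) * (1 - e) := fun x => by
    simp only [mul_assoc, s1, s4, hqq]
  have cQ : ∀ x : R, (1 - e) * x * (1 - e) = (1 - e) * ((1 - e) * x * (1 - e)) * (1 - e) :=
    fun x => by simp only [mul_assoc, s4, hqq]
  -- corners of a product
  have P1 : ∀ x y : R, e * (x * y) * e = (e * x * e) * (e * y * e) := fun x y => by
    simp only [mul_assoc, s1]
    conv_rhs => rw [s5 y]
  have P2 : ∀ x y : R, e * (x * y) * (1 - e) =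
      (e * x * e) * (e * y * (1 - e)) + (e * x * (1 - e)) * ((1 - e) * y * (1 - e)) :=
    fun x y => by
    conv_lhs => rw [hsplit y]
    simp only [mul_add, add_mul, mul_assoc, s1, s4, hqq, he]
  have P3 : ∀ x y : R, (1 - e) * (x * y) * (1 - e) =
      ((1 - e) * x * (1 - e)) * ((1 - e) * y * (1 - e)) := fun x y => by
    conv_lhs => rw [hsplit y]
    simp only [mul_add, add_mul, mul_assoc, s8, mul_zero, zero_add, s4, hqq]
  have cAM : ∀ x y : R, (e * x * e) * (e * y * (1 - e)) =
      e * ((e * x * e) * (e * y * (1 - e))) * (1 - e) := fun x y => by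
    simp only [mul_assoc, s1, s4, he, hqq]
  have cMB : ∀ x y : R, (e * x * (1 - e)) * ((1 - e) * y * (1 - e)) =
      e * ((e * x * (1 - e)) * ((1 - e) * y * (1 - e))) * (1 - e) := fun x y => by
    simp only [mul_assoc, s1, s4, he, hqq]
  -- orthogonality
  have oz1 : ∀ u v : R, (u * e) * ((1 - e) * v) = 0 := fun u v => by
    rw [mul_assoc, ze, mul_zero]
  have oz2 : ∀ u v : R, (u * (1 - e)) * (e * v) = 0 := fun u v => by
    rw [mul_assoc, zq, mul_zero]
  have oz3 : ∀ u v : R, (u * e) * ((1 - e) * v * (1 - e)) = 0 := fun u v => by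
    rw [mul_assoc (1 - e) v]; exact oz1 _ _
  have oz4 : ∀ u v : R, (u * (1 - e)) * (e * v * e) = 0 := fun u v => by
    rw [mul_assoc e v]; exact oz2 _ _
  have oz5 : ∀ u v : R, (u * (1 - e)) * (e * v * (1 - e)) = 0 := fun u v => by
    rw [mul_assoc e v]; exact oz2 _ _
  constructor
  · intro x y
    rw [hext (x + y), hext x, hext y]
    have h1 : e * (x + y) * e = e * x * e + e * y * e := by rw [mul_add, add_mul]
    have h2 : e * (x + y) * (1 - e) = e * x * (1 - e) + e * y * (1 - e) := by
      rw [mul_add, add_mul]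
    have h3 : (1 - e) * (x + y) * (1 - e) = (1 - e) * x * (1 - e) + (1 - e) * y * (1 - e) := by
      rw [mul_add, add_mul]
    rw [h1, h2, h3, hadd_e _ _ (cE x) (cE y), hadd_m _ _ (cM x) (cM y),
      hadd_q _ _ (cQ x) (cQ y)]
    abel
  · intro x y
    -- zero cross terms
    have zAB : δ (e * x * e) * ((1 - e) * y * (1 - e)) = 0 := by
      rw [hpres_e _ (cE x)]; exact oz3 _ _
    have zMA : δ (e * x * (1 - e)) * (e * y * e) = 0 := by
      rw [hpres_m _ (cM x)]; exact oz4 _ _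
    have zMM : δ (e * x * (1 - e)) * (e * y * (1 - e)) = 0 := by
      rw [hpres_m _ (cM x)]; exact oz5 _ _
    have zBA : δ ((1 - e) * x * (1 - e)) * (e * y * e) = 0 := by
      rw [hpres_q _ (cQ x)]; exact oz4 _ _
    have zBM : δ ((1 - e) * x * (1 - e)) * (e * y * (1 - e)) = 0 := by
      rw [hpres_q _ (cQ x)]; exact oz5 _ _
    have wAB : (e * x * e) * δ ((1 - e) * y * (1 - e)) = 0 := by
      rw [hpres_q _ (cQ y)]; exact oz3 _ _
    have wMA : (e * x * (1 - e)) * δ (e * y * e) = 0 := by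
      rw [hpres_e _ (cE y)]; exact oz4 _ _
    have wMM : (e * x * (1 - e)) * δ (e * y * (1 - e)) = 0 := by
      rw [hpres_m _ (cM y)]; exact oz5 _ _
    have wBA : ((1 - e) * x * (1 - e)) * δ (e * y * e) = 0 := by
      rw [hpres_e _ (cE y)]; exact oz4 _ _
    have wBM : ((1 - e) * x * (1 - e)) * δ (e * y * (1 - e)) = 0 := by
      rw [hpres_m _ (cM y)]; exact oz5 _ _
    have hL : δ x * y = δ (e * x * e) * (e * y * e) + δ (e * x * e) * (e * y * (1 - e)) +
        δ (e * x * (1 - e)) * ((1 - e) * y * (1 - e)) +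
        δ ((1 - e) * x * (1 - e)) * ((1 - e) * y * (1 - e)) := by
      conv_lhs => rw [hext x, hdec y]
      simp only [add_mul, mul_add, zAB, zMA, zMM, zBA, zBM, add_zero, zero_add]
      abel
    have hR : x * δ y = (e * x * e) * δ (e * y * e) + (e * x * e) * δ (e * y * (1 - e)) +
        (e * x * (1 - e)) * δ ((1 - e) * y * (1 - e)) +
        ((1 - e) * x * (1 - e)) * δ ((1 - e) * y * (1 - e)) := by
      conv_lhs => rw [hext y, hdec x]
      simp only [add_mul, mul_add, wAB, wMA, wMM, wBA, wBM, add_zero, zero_add]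
      abel
    rw [hext (x * y), P1 x y, P2 x y, P3 x y, hadd_m _ _ (cAM x y) (cMB x y),
      hder_e _ _ (cE x) (cE y), hder_am _ _ (cE x) (cM y), hder_mb _ _ (cM x) (cQ y),
      hder_q _ _ (cQ x) (cQ y), hL, hR]
    abel
end

section
/- Let T = T₃(R_i; M_{ij}) be a triangular 3-matrix ring with standard idempotents Q₁, Q₂, Q₃, satisfying Q_i Z(T) Q_i = Z(Q_i T Q_i) for i = 1, 2, 3. Then for k ∈ {1,3} and Q'_k = 1 - Q_k, one also has Q'_k Z(T) Q'_k = Z(Q'_k T Q'_k). -/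
private lemma aux_complement {T : Type*} [Ring T] (e f : T)
    (he : e * e = e) (hf : f * f = f)
    (hef : e * f = 0) (hfe : f * e = 0)
    (hlow : ∀ x : T, f * x * e = 0)
    (hfaith : ∀ b : T, b = f * b * f → (∀ m : T, (e * m * f) * b = 0) → b = 0)
    (hcent : (fun z => e * z * e) '' Set.center T =
      {c : T | c = e * c * e ∧ ∀ x : T, c * (e * x * e) = (e * x * e) * c}) :
    (fun z => (e + f) * z * (e + f)) '' Set.center T =
      {c : T | c = (e + f) * c * (e + f) ∧
        ∀ x : T, c * ((e + f) * x * (e + f)) = ((e + f) * x * (e + f)) * c} := by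
  have hPP : (e + f) * (e + f) = e + f := by
    rw [mul_add, add_mul, add_mul, he, hf, hef, hfe]; abel
  have hPe : (e + f) * e = e := by rw [add_mul, he, hfe, add_zero]
  have heP : e * (e + f) = e := by rw [mul_add, he, hef, add_zero]
  have hPf : (e + f) * f = f := by rw [add_mul, hef, hf, zero_add]
  have hfP : f * (e + f) = f := by rw [mul_add, hfe, hf, zero_add]
  ext c
  simp only [Set.mem_image, Set.mem_setOf_eq]
  constructor
  · rintro ⟨z, hz, rfl⟩
    have zc : ∀ a : T, z * a = a * z := fun a => (Set.mem_center_iff.mp hz).comm a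
    have key : (e + f) * z * (e + f) = z * (e + f) := by rw [← zc, mul_assoc, hPP]
    constructor
    · rw [key, ← mul_assoc (e + f) z (e + f), key, mul_assoc, hPP]
    · intro x
      rw [key]
      have habs : (e + f) * ((e + f) * x * (e + f)) = (e + f) * x * (e + f) := by
        rw [← mul_assoc, ← mul_assoc, hPP]
      have habs2 : ((e + f) * x * (e + f)) * (e + f) = (e + f) * x * (e + f) := by
        rw [mul_assoc ((e + f) * x), hPP]
      calc (z * (e + f)) * ((e + f) * x * (e + f))
          = z * ((e + f) * ((e + f) * x * (e + f))) := mul_assoc _ _ _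
        _ = z * ((e + f) * x * (e + f)) := by rw [habs]
        _ = ((e + f) * x * (e + f)) * z := zc _
        _ = ((e + f) * x * (e + f)) * (z * (e + f)) := by
            rw [zc (e + f), ← mul_assoc, habs2]
  · rintro ⟨hc1, hc2⟩
    have he' : (e + f) * e * (e + f) = e := by rw [hPe, heP]
    have hf' : (e + f) * f * (e + f) = f := by rw [hPf, hfP]
    have h1 : c * e = e * c := by have h := hc2 e; rwa [he'] at h
    have h2 : c * f = f * c := by have h := hc2 f; rwa [hf'] at h
    have hece : e * c * e = c * e := by rw [← h1, mul_assoc, he]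
    have hfcf : f * c * f = c * f := by rw [← h2, mul_assoc, hf]
    have hecf : e * c * f = 0 := by rw [← h1, mul_assoc, hef, mul_zero]
    have hfce : f * c * e = 0 := hlow c
    have hdecomp : c = c * e + c * f := by
      conv_lhs => rw [hc1]
      rw [mul_add ((e + f) * c) e f, add_mul e f c, add_mul (e * c) (f * c) e,
        add_mul (e * c) (f * c) f, hece, hfce, hecf, hfcf, add_zero, zero_add]
    have hcomm : ∀ x : T, c * (e * x * e) = (e * x * e) * c := by
      intro x
      have h := hc2 (e * x * e)
      rwa [show (e + f) * (e * x * e) * (e + f) = e * x * e from by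
        rw [← mul_assoc, ← mul_assoc, hPe, mul_assoc (e * x) e (e + f), heP]] at h
    have hee : ∀ a : T, e * (e * a * e) = e * a * e := fun a => by
      rw [← mul_assoc, ← mul_assoc, he]
    have heea : ∀ a : T, (e * a * e) * e = e * a * e := fun a => by
      rw [mul_assoc (e * a) e e, he]
    have mm1 : c * e = e * (c * e) * e := by
      rw [← mul_assoc e c e, hece, mul_assoc c e e, he]
    have mm2 : ∀ x : T, (c * e) * (e * x * e) = (e * x * e) * (c * e) := by
      intro x
      calc (c * e) * (e * x * e) = c * (e * (e * x * e)) := mul_assoc c e _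
        _ = c * (e * x * e) := by rw [hee]
        _ = (e * x * e) * c := hcomm x
        _ = (e * x * e) * (c * e) := by
            rw [← mul_assoc (e * x * e) c e, ← hcomm x, mul_assoc c (e * x * e) e, heea x]
    have hmem : (c * e) ∈ {c : T | c = e * c * e ∧
        ∀ x : T, c * (e * x * e) = (e * x * e) * c} := ⟨mm1, mm2⟩
    rw [← hcent] at hmem
    obtain ⟨z, hz, hze0⟩ := hmem
    have hze : e * z * e = c * e := hze0
    have zc : ∀ a : T, z * a = a * z := fun a => (Set.mem_center_iff.mp hz).comm a
    have heze : e * z * e = z * e := by rw [← zc, mul_assoc, he]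
    have hcez : c * e = e * z := by rw [← hze, heze, zc]
    have hfzf : f * z * f = z * f := by rw [← zc, mul_assoc, hf]
    have hcmf : ∀ m : T, c * (e * m * f) = (e * m * f) * c := by
      intro m
      have h := hc2 (e * m * f)
      rwa [show (e + f) * (e * m * f) * (e + f) = e * m * f from by
        rw [← mul_assoc, ← mul_assoc, hPe, mul_assoc (e * m) f (e + f), hfP]] at h
    have hff_red : ∀ a : T, f * (f * a * f) * f = f * a * f := fun a => by
      rw [← mul_assoc, ← mul_assoc, hf, mul_assoc (f * a) f f, hf]
    have hb : f * z * f - f * c * f = f * (f * z * f - f * c * f) * f := by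
      rw [mul_sub f (f * z * f) (f * c * f), sub_mul, hff_red z, hff_red c]
    have lemA : ∀ m : T, (e * m * f) * (f * z * f) = ((e * z) * m) * f := by
      intro m
      calc (e * m * f) * (f * z * f)
          = (e * m * f) * (z * f) := by rw [hfzf]
        _ = ((e * m * f) * z) * f := (mul_assoc _ z f).symm
        _ = (z * (e * m * f)) * f := by rw [← zc]
        _ = ((z * e) * (m * f)) * f := by
            rw [mul_assoc e m f, ← mul_assoc z e (m * f)]
        _ = ((e * z) * (m * f)) * f := by rw [zc e]
        _ = ((e * z) * m) * f := by
            rw [← mul_assoc (e * z) m f, mul_assoc ((e * z) * m) f f, hf]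
    have lemB : ∀ m : T, (e * m * f) * (f * c * f) = ((c * e) * m) * f := by
      intro m
      calc (e * m * f) * (f * c * f)
          = (e * m * f) * (c * f) := by rw [hfcf]
        _ = ((e * m * f) * c) * f := (mul_assoc _ c f).symm
        _ = (c * (e * m * f)) * f := by rw [← hcmf m]
        _ = (((c * e) * m) * f) * f := by
            rw [← mul_assoc c (e * m) f, ← mul_assoc c e m]
        _ = ((c * e) * m) * f := by rw [mul_assoc ((c * e) * m) f f, hf]
    have hmul : ∀ m : T, (e * m * f) * (f * z * f - f * c * f) = 0 := by
      intro m
      rw [mul_sub, lemA m, lemB m, hcez, sub_self]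
    have hfzfc : f * z * f = f * c * f := sub_eq_zero.mp (hfaith _ hb hmul)
    refine ⟨z, hz, ?_⟩
    show (e + f) * z * (e + f) = c
    calc (e + f) * z * (e + f) = z * (e + f) := by rw [← zc, mul_assoc, hPP]
      _ = z * e + z * f := mul_add z e f
      _ = c * e + c * f := by rw [← heze, hze, ← hfzf, hfzfc, hfcf]
      _ = c := hdecomp.symm

/-- If the compression of the center by each diagonal idempotent `Q i` equals the center
of the corresponding corner, then the same holds for the complementary idempotents
`1 - Q k`, `k ∈ {1, 3}` (here indexed `k = 0` and `k = 2`). -/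
theorem complement_center_condition (T : Type*) [Ring T] (Q : Fin 3 → T)
    (hidem : ∀ i, Q i * Q i = Q i)
    (horth : ∀ i j, i ≠ j → Q i * Q j = 0)
    (hsum : Q 0 + Q 1 + Q 2 = 1)
    (hlower : ∀ i j : Fin 3, j < i → ∀ x : T, Q i * x * Q j = 0)
    (hfaithL : ∀ i j : Fin 3, i < j → ∀ a : T, a = Q i * a * Q i →
      (∀ m : T, a * (Q i * m * Q j) = 0) → a = 0)
    (hfaithR : ∀ i j : Fin 3, i < j → ∀ b : T, b = Q j * b * Q j →
      (∀ m : T, (Q i * m * Q j) * b = 0) → b = 0)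
    (hcenter : ∀ i : Fin 3, (fun z => Q i * z * Q i) '' Set.center T =
      {c : T | c = Q i * c * Q i ∧ ∀ x : T, c * (Q i * x * Q i) = (Q i * x * Q i) * c}) :
    ∀ k : Fin 3, k = 0 ∨ k = 2 →
      (fun z => (1 - Q k) * z * (1 - Q k)) '' Set.center T =
        {c : T | c = (1 - Q k) * c * (1 - Q k) ∧
          ∀ x : T, c * ((1 - Q k) * x * (1 - Q k)) = ((1 - Q k) * x * (1 - Q k)) * c} := by
  intro k hk
  rcases hk with rfl | rfl
  · have hP : (1 : T) - Q 0 = Q 1 + Q 2 := by rw [← hsum]; abel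
    rw [hP]
    exact aux_complement (Q 1) (Q 2) (hidem 1) (hidem 2) (horth 1 2 (by decide))
      (horth 2 1 (by decide)) (fun x => hlower 2 1 (by decide) x)
      (fun b hb hm => hfaithR 1 2 (by decide) b hb hm) (hcenter 1)
  · have hP : (1 : T) - Q 2 = Q 0 + Q 1 := by rw [← hsum]; abel
    rw [hP]
    exact aux_complement (Q 0) (Q 1) (hidem 0) (hidem 1) (horth 0 1 (by decide))
      (horth 1 0 (by decide)) (fun x => hlower 1 0 (by decide) x)
      (fun b hb hm => hfaithR 0 1 (by decide) b hb hm) (hcenter 0)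
end
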